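/- Let W̃ be a Darboux transformation of W with D = VN ∈ D(W) as in the definition. Then V·D(W̃)·N ⊆ D(W) and N·D(W)·V ⊆ D(W̃). -/

import Mathlib

open Polynomial Matrix MeasureTheory
open scoped ComplexOrder

/-- Matrix polynomials: square matrices with polynomial entries. -/
abbrev MatP (n : Type*) := Matrix n n (Polynomial ℂ)

section MatFramework
variable {n : Type*} [Fintype n] [DecidableEq n]

/-- Entrywise `j`-th derivative of a matrix polynomial. -/
noncomputable def derivIter (j : ℕ) (P : MatP n) : MatP n :=
  P.map (fun p => Polynomial.derivative^[j] p)

/-- Right action of the differential operator `∑_j ∂^j F j` on a matrix polynomial: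
`P · D = ∑_j P^{(j)} F_j`. -/
noncomputable def actOp (F : ℕ →₀ MatP n) (P : MatP n) : MatP n :=
  F.sum fun j Fj => derivIter j P * Fj

/-- A map on matrix polynomials is a matrix differential operator with polynomial
coefficients if it is given by some `∑_j ∂^j F_j`. -/
def IsDiffOp (L : MatP n → MatP n) : Prop :=
  ∃ F : ℕ →₀ MatP n, ∀ P, L P = actOp F P

/-- Degree of a matrix polynomial: the sup of the degrees of its entries. -/
noncomputable def matDeg (P : MatP n) : WithBot ℕ :=
  Finset.univ.sup fun ij : n × n => (P ij.1 ij.2).degree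

/-- A differential operator is degree-preserving if `deg (P · V) = deg P` for all `P`. -/
def DegPres (L : MatP n → MatP n) : Prop :=
  IsDiffOp L ∧ ∀ P, matDeg (L P) = matDeg P

/-- Natural-number degree of a matrix polynomial. -/
noncomputable def matNatDeg (P : MatP n) : ℕ :=
  Finset.univ.sup fun ij : n × n => (P ij.1 ij.2).natDegree

/-- Leading coefficient of a matrix polynomial. -/
noncomputable def matLead (P : MatP n) : Matrix n n ℂ :=
  Matrix.of fun i j => (P i j).coeff (matNatDeg P)

/-- Evaluation of a matrix polynomial at a real point. -/
noncomputable def evalMP (P : MatP n) (x : ℝ) : Matrix n n ℂ :=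
  Matrix.of fun i j => (P i j).eval (x : ℂ)

/-- The matrix-valued inner product `⟨P,Q⟩ = ∫_S P(x) W(x) Q(x)^* dx`. -/
noncomputable def wInner (S : Set ℝ) (W : ℝ → Matrix n n ℂ) (P Q : MatP n) :
    Matrix n n ℂ :=
  Matrix.of fun i j => ∫ x in S, (evalMP P x * W x * (evalMP Q x)ᴴ) i j

/-- `W` is a weight matrix supported on `S`: positive definite on `S` with finite moments. -/
def IsWeight (S : Set ℝ) (W : ℝ → Matrix n n ℂ) : Prop :=
  MeasurableSet S ∧ volume S ≠ 0 ∧ (∀ x ∈ S, (W x).PosDef) ∧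
  ∀ (k : ℕ) (i j : n), IntegrableOn (fun x => ‖W x i j‖ * |x| ^ k) S

/-- `P` is the sequence of monic orthogonal matrix polynomials for the weight `W` on `S`. -/
def MonicOPS (S : Set ℝ) (W : ℝ → Matrix n n ℂ) (P : ℕ → MatP n) : Prop :=
  (∀ k, matNatDeg (P k) = k) ∧
  (∀ k, (Matrix.of fun i j => ((P k) i j).coeff k) = (1 : Matrix n n ℂ)) ∧
  (∀ k l, k ≠ l → wInner S W (P k) (P l) = 0)

/-- Membership in the algebra `D(W)`: a differential operator having the (monic orthogonal)
polynomials `P_k` as eigenfunctions with matrix eigenvalues. -/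
def InDW (P : ℕ → MatP n) (L : MatP n → MatP n) : Prop :=
  IsDiffOp L ∧ ∀ k, ∃ Λ : Matrix n n ℂ, L (P k) = Λ.map Polynomial.C * P k

/-- `Pt` (the monic OPS of `W̃`) is obtained from `P` (the monic OPS of `W`) by a Darboux
transformation: some `D = V N ∈ D(W)` with `V, N` degree-preserving and
`P_k · V = A_k P̃_k`, `A_k` nonsingular. -/
def IsDarbouxPair (P Pt : ℕ → MatP n) : Prop :=
  ∃ V Nd : MatP n → MatP n, DegPres V ∧ DegPres Nd ∧
    InDW P (fun Q => Nd (V Q)) ∧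
    ∀ k, ∃ A : Matrix n n ℂ, IsUnit A ∧ V (P k) = A.map Polynomial.C * Pt k

end MatFramework

/-! Pulling the invertible constant `A_k` through `N` turns `P_k · VN = Λ_k P_k` into
`P̃_k · N = A_k⁻¹ Λ_k P_k`. So `V` carries `P_k` to a constant multiple of `P̃_k` and `N` carries
`P̃_k` back to a constant multiple of `P_k`; sandwiching an operator with eigenfunctions `P̃_k`
(resp. `P_k`) between them gives one with eigenfunctions `P_k` (resp. `P̃_k`). By the Leibniz rule
the sandwich is again a differential operator. -/

section DiffOp

variable {n : Type*}

lemma derivIter_succ (j : ℕ) (P : MatP n) :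
    derivIter (j + 1) P = derivIter 1 (derivIter j P) := by
  ext i k
  simp [derivIter, Function.iterate_succ_apply']

lemma derivIter_one_sum {ι : Type*} (s : Finset ι) (f : ι → MatP n) :
    derivIter 1 (∑ i ∈ s, f i) = ∑ i ∈ s, derivIter 1 (f i) := by
  ext i k
  simp [derivIter, Matrix.sum_apply]

variable [Fintype n]

lemma derivIter_one_mul (P Q : MatP n) :
    derivIter 1 (P * Q) = derivIter 1 P * Q + P * derivIter 1 Q := by
  ext i k
  simp only [derivIter, Matrix.map_apply, Matrix.add_apply, Matrix.mul_apply,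
    Function.iterate_one, derivative_sum, derivative_mul, Finset.sum_add_distrib]

lemma derivIter_map_C_mul (M : Matrix n n ℂ) (j : ℕ) (Q : MatP n) :
    derivIter j (M.map C * Q) = M.map C * derivIter j Q := by
  have hM : derivIter 1 (M.map C) = 0 := by
    ext i k
    simp [derivIter]
  induction j with
  | zero => rfl
  | succ j ih => rw [derivIter_succ j, ih, derivIter_one_mul, hM, zero_mul, zero_add,
      derivIter_succ j Q]

lemma actOp_map_C_mul (F : ℕ →₀ MatP n) (M : Matrix n n ℂ) (Q : MatP n) :
    actOp F (M.map C * Q) = M.map C * actOp F Q := by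
  simp only [actOp, Finsupp.sum, Finset.mul_sum, derivIter_map_C_mul, mul_assoc]

lemma actOp_add_left (F G : ℕ →₀ MatP n) (P : MatP n) :
    actOp (F + G) P = actOp F P + actOp G P :=
  Finsupp.sum_add_index' (fun _ => mul_zero _) (fun _ _ _ => mul_add _ _ _)

lemma actOp_single (j : ℕ) (M P : MatP n) :
    actOp (Finsupp.single j M) P = derivIter j P * M :=
  Finsupp.sum_single_index (mul_zero _)

namespace IsDiffOp

variable {L L₁ L₂ : MatP n → MatP n}

lemma map_C_mul (hL : IsDiffOp L) (M : Matrix n n ℂ) (Q : MatP n) :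
    L (M.map C * Q) = M.map C * L Q := by
  obtain ⟨F, hF⟩ := hL
  rw [hF, hF, actOp_map_C_mul]

lemma add (h₁ : IsDiffOp L₁) (h₂ : IsDiffOp L₂) : IsDiffOp (fun P => L₁ P + L₂ P) := by
  obtain ⟨F, hF⟩ := h₁
  obtain ⟨G, hG⟩ := h₂
  exact ⟨F + G, fun P => by simp only [hF, hG, actOp_add_left]⟩

lemma mul_right (hL : IsDiffOp L) (M : MatP n) : IsDiffOp (fun P => L P * M) := by
  obtain ⟨F, hF⟩ := hL
  refine ⟨F.mapRange (· * M) (zero_mul M), fun P => ?_⟩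
  simp only [hF, actOp]
  rw [Finsupp.sum_mapRange_index fun _ => mul_zero _]
  simp only [Finsupp.sum, Finset.sum_mul, mul_assoc]

/-- Leibniz: `(∑ P^{(j)} F_j)' = ∑ P^{(j+1)} F_j + ∑ P^{(j)} F_j'`. -/
lemma derivIter_one_comp (hL : IsDiffOp L) : IsDiffOp (fun P => derivIter 1 (L P)) := by
  obtain ⟨F, hF⟩ := hL
  have hF' : derivIter 1 (0 : MatP n) = 0 := by
    ext i k
    simp [derivIter]
  refine ⟨F.mapDomain (· + 1) + F.mapRange (derivIter 1) hF', fun P => ?_⟩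
  simp only [hF, actOp_add_left]
  unfold actOp
  rw [Finsupp.sum_mapDomain_index (fun _ => mul_zero _) (fun _ _ _ => mul_add _ _ _),
    Finsupp.sum_mapRange_index fun _ => mul_zero _]
  simp only [Finsupp.sum, ← Finset.sum_add_distrib, derivIter_one_sum, derivIter_one_mul,
    ← derivIter_succ]

lemma derivIter_comp (hL : IsDiffOp L) (j : ℕ) : IsDiffOp (fun P => derivIter j (L P)) := by
  induction j with
  | zero => exact hL
  | succ j ih => simpa only [← derivIter_succ] using ih.derivIter_one_comp

lemma actOp_comp (hL : IsDiffOp L) (F : ℕ →₀ MatP n) : IsDiffOp (fun P => actOp F (L P)) := by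
  induction F using Finsupp.induction with
  | zero => exact ⟨0, fun P => by simp [actOp]⟩
  | single_add j M G _ _ ih =>
      simpa only [actOp_add_left, actOp_single] using ((hL.derivIter_comp j).mul_right M).add ih

lemma comp (h₁ : IsDiffOp L₁) (h₂ : IsDiffOp L₂) : IsDiffOp (fun P => L₂ (L₁ P)) := by
  obtain ⟨F, hF⟩ := h₂
  simpa only [hF] using h₁.actOp_comp F

lemma apply_eq_of_apply_map_C_mul [DecidableEq n] (hL : IsDiffOp L) {A Λ : Matrix n n ℂ}
    (hA : IsUnit A) {Q R : MatP n} (h : L (A.map C * Q) = Λ.map C * R) :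
    L Q = (A⁻¹ * Λ).map C * R := by
  have hA' : A⁻¹ * A = 1 := Matrix.nonsing_inv_mul A ((Matrix.isUnit_iff_isUnit_det A).mp hA)
  rw [hL.map_C_mul] at h
  calc L Q = (A⁻¹ * A).map C * L Q := by rw [hA', Matrix.map_one _ C_0 C_1, one_mul]
    _ = (A⁻¹ * Λ).map C * R := by rw [Matrix.map_mul, Matrix.map_mul, mul_assoc, h, mul_assoc]

end IsDiffOp

end DiffOp

lemma inDW_comp_of_intertwining {n : Type*} [Fintype n] {P Pt : ℕ → MatP n}
    {X Y A : MatP n → MatP n} (hX : IsDiffOp X) (hY : IsDiffOp Y)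
    (hXY : ∀ k, ∃ M M' : Matrix n n ℂ, X (P k) = M.map C * Pt k ∧ Y (Pt k) = M'.map C * P k)
    (hA : InDW Pt A) : InDW P (fun Q => Y (A (X Q))) := by
  refine ⟨(hX.comp hA.1).comp hY, fun k => ?_⟩
  obtain ⟨M, M', hXk, hYk⟩ := hXY k
  obtain ⟨Γ, hAk⟩ := hA.2 k
  exact ⟨M * Γ * M', by simp only [hXk, hA.1.map_C_mul, hAk, hY.map_C_mul, hYk,
    Matrix.map_mul, mul_assoc]⟩

/-- For right-acting operators, `P · (V A N)` is `Nd (A (V P))`. -/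
theorem stmt8_general {n : Type*} [Fintype n] [DecidableEq n]
    (P Pt : ℕ → MatP n)
    (V Nd : MatP n → MatP n) (hV : DegPres V) (hN : DegPres Nd)
    (hD : InDW P (fun Q => Nd (V Q)))
    (hA : ∀ k, ∃ A : Matrix n n ℂ, IsUnit A ∧ V (P k) = A.map Polynomial.C * Pt k) :
    (∀ A : MatP n → MatP n, InDW Pt A → InDW P (fun Q => Nd (A (V Q)))) ∧
    (∀ A : MatP n → MatP n, InDW P A → InDW Pt (fun Q => V (A (Nd Q)))) := by
  have hVN : ∀ k, ∃ M M' : Matrix n n ℂ,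
      V (P k) = M.map C * Pt k ∧ Nd (Pt k) = M'.map C * P k := fun k => by
    obtain ⟨Λ, hΛ⟩ := hD.2 k
    obtain ⟨A, hAu, hVP⟩ := hA k
    exact ⟨A, A⁻¹ * Λ, hVP, hN.1.apply_eq_of_apply_map_C_mul hAu (hVP ▸ hΛ)⟩
  refine ⟨fun A hA' => inDW_comp_of_intertwining hV.1 hN.1 hVN hA',
    fun A hA' => inDW_comp_of_intertwining hN.1 hV.1 (fun k => ?_) hA'⟩
  obtain ⟨M, M', hVk, hNk⟩ := hVN k
  exact ⟨M', M, hNk, hVk⟩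

/-- If `W̃` is a Darboux transformation of `W` via `D = V N ∈ D(W)`, then
`V · D(W̃) · N ⊆ D(W)` and `N · D(W) · V ⊆ D(W̃)`.  (For right-acting operators,
`P · (V A N) = N-image of (A-image of (P · V))`.) -/
theorem stmt8 {n : Type*} [Fintype n] [DecidableEq n]
    (S : Set ℝ) (W Wt : ℝ → Matrix n n ℂ)
    (hW : IsWeight S W) (hWt : IsWeight S Wt)
    (P Pt : ℕ → MatP n) (hP : MonicOPS S W P) (hPt : MonicOPS S Wt Pt)
    (V Nd : MatP n → MatP n) (hV : DegPres V) (hN : DegPres Nd)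
    (hD : InDW P (fun Q => Nd (V Q)))
    (hA : ∀ k, ∃ A : Matrix n n ℂ, IsUnit A ∧ V (P k) = A.map Polynomial.C * Pt k) :
    (∀ A : MatP n → MatP n, InDW Pt A → InDW P (fun Q => Nd (A (V Q)))) ∧
    (∀ A : MatP n → MatP n, InDW P A → InDW Pt (fun Q => V (A (Nd Q)))) :=
  stmt8_general P Pt V Nd hV hN hD hA
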